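/- arXiv:2505.09584 — 3 statements merged into one kernel-verified Lean document; each statement's English description precedes it below -/
import Mathlib

section
/- Let S = {v_1, ..., v_n} ⊂ R^q with Fermat-Weber function f(x) = (1/n)·Σ_j d_tr(x, v_j) and Fermat-Weber set FW(S) (the set of minimizers of f, which is nonempty and closed). Then for every x ∈ R^q, (1/n)·d_tr(x, FW(S)) ≤ f(x) − min_y f(y), where d_tr(x, FW(S)) = inf_{y ∈ FW(S)} d_tr(x, y). -/
/-- The tropical symmetric distance on `ℝ^q`. -/
noncomputable def dtr (q : ℕ) [NeZero q] (x y : Fin q → ℝ) : ℝ :=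
  (Finset.univ.sup' Finset.univ_nonempty fun i => y i - x i) -
  (Finset.univ.inf' Finset.univ_nonempty fun i => y i - x i)

/-- The Fermat-Weber function of the sample `v 1, …, v n`. -/
noncomputable def fwFun (q n : ℕ) [NeZero q] (v : Fin n → Fin q → ℝ)
    (x : Fin q → ℝ) : ℝ :=
  (1 / (n : ℝ)) * ∑ j, dtr q x (v j)

/-- The set of Fermat-Weber points: global minimizers of the Fermat-Weber function. -/
noncomputable def FW (q n : ℕ) [NeZero q] (v : Fin n → Fin q → ℝ) : Set (Fin q → ℝ) :=
  {x | ∀ z : Fin q → ℝ, fwFun q n v x ≤ fwFun q n v z}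

/-!
Write `F y = ∑ⱼ d_tr(y, vⱼ)`, so that `d_tr(w, v) = max (v - w) - min (v - w)`. Moving `w` to
`w - t • e` changes `F` for small `t > 0` at the rate `G e = ∑ⱼ (max_{Aⱼ} e - min_{Bⱼ} e)`, where
`Aⱼ` and `Bⱼ` are the coordinates at which `vⱼ - w` is maximal resp. minimal, and by convexity
`F w + G (w - z) ≤ F z`. The functional `G` is additive on comonotone pairs, so splitting a
direction into its level sets shows that if `G` is negative somewhere, it is negative at some
0/1-vector `1_s`; there it is an integer, hence at most `-1`. So every non-minimizer `w` admits
`w'` with `F w' ≤ F w - t` and `d_tr(w, w') ≤ t`, for some `t > 0`. For `r < 1` a minimizer of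
`F + r • d_tr(x, ·)`, which exists since both terms are invariant under adding constants, is
therefore a Fermat-Weber point `w`, with `r • d_tr(x, w) ≤ F x - min F`. Let `r → 1`.
-/

open Finset Filter Topology

namespace Finset

variable {ι : Type*} {s : Finset ι} (hs : s.Nonempty) {f g : ι → ℝ}

theorem sup'_add_of_monovary (h : Monovary f g) :
    s.sup' hs (f + g) = s.sup' hs f + s.sup' hs g := by
  refine le_antisymm (sup'_le _ _ fun i hi => add_le_add (le_sup' f hi) (le_sup' g hi)) ?_
  obtain ⟨i, hi, hfi⟩ := exists_mem_eq_sup' hs f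
  obtain ⟨k, hk, hgk⟩ := exists_mem_eq_sup' hs g
  rcases lt_or_ge (g i) (g k) with hlt | hge
  · exact le_sup'_of_le _ hk (by have := h hlt; simp only [Pi.add_apply]; linarith)
  · exact le_sup'_of_le _ hi (by simp only [Pi.add_apply]; linarith)

theorem inf'_add_of_monovary (h : Monovary f g) :
    s.inf' hs (f + g) = s.inf' hs f + s.inf' hs g := by
  refine le_antisymm ?_ (le_inf' _ _ fun i hi => add_le_add (inf'_le f hi) (inf'_le g hi))
  obtain ⟨i, hi, hfi⟩ := exists_mem_eq_inf' hs f
  obtain ⟨k, hk, hgk⟩ := exists_mem_eq_inf' hs g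
  rcases lt_or_ge (g k) (g i) with hlt | hge
  · exact inf'_le_of_le _ hk (by have := h hlt; simp only [Pi.add_apply]; linarith)
  · exact inf'_le_of_le _ hi (by simp only [Pi.add_apply]; linarith)

theorem sup'_smul_of_nonneg {c : ℝ} (hc : 0 ≤ c) : s.sup' hs (c • f) = c * s.sup' hs f :=
  (mul₀_sup' hc f s hs).symm

theorem inf'_smul_of_nonneg {c : ℝ} (hc : 0 ≤ c) : s.inf' hs (c • f) = c * s.inf' hs f :=
  (apply_inf'_eq_inf'_comp hs (c * ·) fun x y => mul_min_of_nonneg x y hc).symm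

end Finset

section LevelSets

variable {ι : Type*}

theorem monovary_min_smul_indicator (u : ι → ℝ) {a b : ℝ} (hba : b ≤ a) :
    Monovary (fun i => min (u i) b) ((a - b) • {i | b < u i}.indicator (1 : ι → ℝ)) := by
  intro i k hik
  by_cases hi : b < u i <;> by_cases hk : b < u k <;>
    simp [hi, hk] at hik ⊢ <;> first | exact .inr hk.le | linarith

theorem eq_min_add_smul_indicator {u : ι → ℝ} {a b : ℝ} (hba : b < a)
    (h : ∀ i, u i = a ∨ u i ≤ b) :
    u = (fun i => min (u i) b) + (a - b) • {i | b < u i}.indicator (1 : ι → ℝ) := by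
  ext i
  rcases h i with h | h
  · simp [h, hba, hba.le]
  · simp [h, not_lt.2 h]

theorem exists_indicator_neg_of_monovary_additive [Fintype ι] [Nonempty ι] {G : (ι → ℝ) → ℝ}
    (hadd : ∀ f g, Monovary f g → G (f + g) = G f + G g)
    (hsmul : ∀ δ : ℝ, 0 ≤ δ → ∀ f, G (δ • f) = δ * G f) (hconst : ∀ a : ℝ, G (fun _ => a) = 0)
    {u : ι → ℝ} (hu : G u < 0) : ∃ s : Set ι, G (s.indicator 1) < 0 := by
  by_contra! hs
  suffices ∀ N (u : ι → ℝ), #(univ.image u) = N → 0 ≤ G u from (this _ u rfl).not_gt hu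
  intro N
  induction N using Nat.strong_induction_on with
  | _ N ih =>
  intro u hN
  set M := univ.sup' univ_nonempty u
  have hM : M ∈ univ.image u :=
    let ⟨i, _, hi⟩ := exists_mem_eq_sup' univ_nonempty u
    mem_image.2 ⟨i, mem_univ i, hi.symm⟩
  rcases ((univ.image u).erase M).eq_empty_or_nonempty with hE | hE
  · have hu_const : u = fun _ => M := funext fun i => by
      by_contra h
      simpa [hE] using mem_erase.2 ⟨h, mem_image_of_mem u (mem_univ i)⟩
    rw [hu_const, hconst]
  -- `b` is the second largest value of `u`; lowering the top level set to `b` loses a value.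
  obtain ⟨b, hb, hbmax⟩ : ∃ b ∈ (univ.image u).erase M, ∀ y ∈ (univ.image u).erase M, y ≤ b :=
    ⟨_, max'_mem _ hE, fun y hy => le_max' _ y hy⟩
  have hbM : b < M := by
    obtain ⟨hbM, hb⟩ := mem_erase.1 hb
    obtain ⟨i, -, rfl⟩ := mem_image.1 hb
    exact lt_of_le_of_ne (le_sup' u (mem_univ i)) hbM
  have htop : ∀ i, u i = M ∨ u i ≤ b := fun i => by
    by_cases h : u i = M
    · exact .inl h
    · exact .inr (hbmax _ (mem_erase.2 ⟨h, mem_image_of_mem u (mem_univ i)⟩))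
  have hcard : #(univ.image fun i => min (u i) b) < N := by
    rw [← hN]
    refine (card_le_card fun y hy => ?_).trans_lt (card_erase_lt_of_mem hM)
    obtain ⟨i, -, rfl⟩ := mem_image.1 hy
    rcases htop i with h | h
    · rwa [h, min_eq_right hbM.le]
    · rw [min_eq_left h]
      exact mem_erase.2 ⟨(h.trans_lt hbM).ne, mem_image_of_mem u (mem_univ i)⟩
  rw [eq_min_add_smul_indicator hbM htop, hadd _ _ (monovary_min_smul_indicator u hbM.le),
    hsmul _ (sub_nonneg.2 hbM.le)]
  exact add_nonneg (ih _ hcard _ rfl) (mul_nonneg (sub_nonneg.2 hbM.le) (hs _))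

end LevelSets

section TropNorm

variable {ι : Type*} [Fintype ι] [Nonempty ι]

noncomputable def maximizers (c : ι → ℝ) : Finset ι := univ.filter fun i => ∀ k, c k ≤ c i

noncomputable def minimizers (c : ι → ℝ) : Finset ι := univ.filter fun i => ∀ k, c i ≤ c k

theorem maximizers_nonempty (c : ι → ℝ) : (maximizers c).Nonempty :=
  let ⟨i, hi⟩ := Finite.exists_max c
  ⟨i, by simpa [maximizers] using hi⟩

theorem minimizers_nonempty (c : ι → ℝ) : (minimizers c).Nonempty :=
  let ⟨i, hi⟩ := Finite.exists_min c
  ⟨i, by simpa [minimizers] using hi⟩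

section

variable {c : ι → ℝ} {i : ι}

theorem sup'_eq_of_mem_maximizers (hi : i ∈ maximizers c) : univ.sup' univ_nonempty c = c i :=
  le_antisymm (sup'_le _ _ fun k _ => (mem_filter.1 hi).2 k) (le_sup' c (mem_univ i))

theorem inf'_eq_of_mem_minimizers (hi : i ∈ minimizers c) : univ.inf' univ_nonempty c = c i :=
  le_antisymm (inf'_le c (mem_univ i)) (le_inf' _ _ fun k _ => (mem_filter.1 hi).2 k)

theorem lt_sup'_of_notMem_maximizers (hi : i ∉ maximizers c) :
    c i < univ.sup' univ_nonempty c := by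
  simp only [maximizers, mem_filter, mem_univ, true_and, not_forall, not_le] at hi
  obtain ⟨k, hk⟩ := hi
  exact hk.trans_le (le_sup' c (mem_univ k))

theorem inf'_lt_of_notMem_minimizers (hi : i ∉ minimizers c) :
    univ.inf' univ_nonempty c < c i := by
  simp only [minimizers, mem_filter, mem_univ, true_and, not_forall, not_le] at hi
  obtain ⟨k, hk⟩ := hi
  exact (inf'_le c (mem_univ k)).trans_lt hk

end

variable (c e : ι → ℝ)

theorem sup'_add_sup'_maximizers_le :
    univ.sup' univ_nonempty c + (maximizers c).sup' (maximizers_nonempty c) e ≤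
      univ.sup' univ_nonempty (c + e) := by
  obtain ⟨a, ha, hae⟩ := exists_mem_eq_sup' (maximizers_nonempty c) e
  rw [hae, sup'_eq_of_mem_maximizers ha]
  exact le_sup' (c + e) (mem_univ a)

theorem inf'_add_le_inf'_add_inf'_minimizers :
    univ.inf' univ_nonempty (c + e) ≤
      univ.inf' univ_nonempty c + (minimizers c).inf' (minimizers_nonempty c) e := by
  obtain ⟨b, hb, hbe⟩ := exists_mem_eq_inf' (minimizers_nonempty c) e
  rw [hbe, inf'_eq_of_mem_minimizers hb]
  exact inf'_le (c + e) (mem_univ b)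

theorem eventually_sup'_add_smul_le : ∀ᶠ t in 𝓝[>] (0 : ℝ),
    univ.sup' univ_nonempty (c + t • e) ≤
      univ.sup' univ_nonempty c + t * (maximizers c).sup' (maximizers_nonempty c) e := by
  set D := (maximizers c).sup' (maximizers_nonempty c) e
  have hcoord : ∀ i, ∀ᶠ t in 𝓝[>] (0 : ℝ), 0 < t →
      c i + t * e i ≤ univ.sup' univ_nonempty c + t * D := by
    intro i
    by_cases hi : i ∈ maximizers c
    · refine Eventually.of_forall fun t ht => ?_
      rw [sup'_eq_of_mem_maximizers hi]
      gcongr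
      exact le_sup' e hi
    · have hlim : Tendsto (fun t => c i + t * e i - t * D) (𝓝[>] 0) (𝓝 (c i)) :=
        tendsto_nhdsWithin_of_tendsto_nhds ((by fun_prop : Continuous fun t : ℝ =>
          c i + t * e i - t * D).tendsto' 0 _ (by simp))
      filter_upwards [hlim.eventually (eventually_lt_nhds (lt_sup'_of_notMem_maximizers hi))]
        with t ht _
      linarith
  filter_upwards [eventually_all.2 hcoord, self_mem_nhdsWithin] with t ht htpos
  exact sup'_le _ _ fun i _ => ht i htpos

theorem eventually_le_inf'_add_smul : ∀ᶠ t in 𝓝[>] (0 : ℝ),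
    univ.inf' univ_nonempty c + t * (minimizers c).inf' (minimizers_nonempty c) e ≤
      univ.inf' univ_nonempty (c + t • e) := by
  set D := (minimizers c).inf' (minimizers_nonempty c) e
  have hcoord : ∀ i, ∀ᶠ t in 𝓝[>] (0 : ℝ), 0 < t →
      univ.inf' univ_nonempty c + t * D ≤ c i + t * e i := by
    intro i
    by_cases hi : i ∈ minimizers c
    · refine Eventually.of_forall fun t ht => ?_
      rw [inf'_eq_of_mem_minimizers hi]
      gcongr
      exact inf'_le e hi
    · have hlim : Tendsto (fun t => c i + t * e i - t * D) (𝓝[>] 0) (𝓝 (c i)) :=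
        tendsto_nhdsWithin_of_tendsto_nhds ((by fun_prop : Continuous fun t : ℝ =>
          c i + t * e i - t * D).tendsto' 0 _ (by simp))
      filter_upwards [hlim.eventually (eventually_gt_nhds (inf'_lt_of_notMem_minimizers hi))]
        with t ht _
      linarith
  filter_upwards [eventually_all.2 hcoord, self_mem_nhdsWithin] with t ht htpos
  exact le_inf' _ _ fun i _ => ht i htpos

noncomputable def tropNorm (u : ι → ℝ) : ℝ :=
  univ.sup' univ_nonempty u - univ.inf' univ_nonempty u

theorem tropNorm_nonneg : 0 ≤ tropNorm c :=
  sub_nonneg.2 ((inf'_le c (mem_univ (Classical.arbitrary ι))).trans (le_sup' c (mem_univ _)))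

theorem tropNorm_zero : tropNorm (0 : ι → ℝ) = 0 := by
  simp [tropNorm]

theorem tropNorm_add_le : tropNorm (c + e) ≤ tropNorm c + tropNorm e := by
  have hsup : univ.sup' univ_nonempty (c + e) ≤
      univ.sup' univ_nonempty c + univ.sup' univ_nonempty e :=
    sup'_le _ _ fun i hi => add_le_add (le_sup' c hi) (le_sup' e hi)
  have hinf : univ.inf' univ_nonempty c + univ.inf' univ_nonempty e ≤
      univ.inf' univ_nonempty (c + e) :=
    le_inf' _ _ fun i hi => add_le_add (inf'_le c hi) (inf'_le e hi)
  unfold tropNorm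
  linarith

theorem tropNorm_add_const (a : ℝ) : tropNorm (c + fun _ => a) = tropNorm c := by
  have h : Monovary c fun _ => a := monovary_const_right c a
  rw [tropNorm, tropNorm, sup'_add_of_monovary _ h, inf'_add_of_monovary _ h, sup'_const,
    inf'_const]
  ring

variable {c} in
theorem tropNorm_le_of_forall_mem_Icc {a b : ℝ} (h : ∀ i, c i ∈ Set.Icc a b) :
    tropNorm c ≤ b - a :=
  sub_le_sub (sup'_le _ _ fun i _ => (h i).2) (le_inf' _ _ fun i _ => (h i).1)

variable {c} in
theorem abs_le_tropNorm_of_eq_zero {i₀ : ι} (h : c i₀ = 0) (i : ι) : |c i| ≤ tropNorm c := by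
  have := le_sup' c (mem_univ i)
  have := le_sup' c (mem_univ i₀)
  have := inf'_le c (mem_univ i)
  have := inf'_le c (mem_univ i₀)
  rw [abs_le, tropNorm]
  constructor <;> linarith

theorem continuous_tropNorm : Continuous (tropNorm : (ι → ℝ) → ℝ) :=
  (Continuous.finset_sup'_apply _ fun i _ => continuous_apply i).sub
    (Continuous.finset_inf'_apply _ fun i _ => continuous_apply i)

noncomputable def tropNormDeriv (c e : ι → ℝ) : ℝ :=
  (maximizers c).sup' (maximizers_nonempty c) e - (minimizers c).inf' (minimizers_nonempty c) e

theorem tropNorm_add_tropNormDeriv_le : tropNorm c + tropNormDeriv c e ≤ tropNorm (c + e) := by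
  have := sup'_add_sup'_maximizers_le c e
  have := inf'_add_le_inf'_add_inf'_minimizers c e
  unfold tropNorm tropNormDeriv
  linarith

theorem eventually_tropNorm_add_smul_le :
    ∀ᶠ t in 𝓝[>] (0 : ℝ), tropNorm (c + t • e) ≤ tropNorm c + t * tropNormDeriv c e := by
  filter_upwards [eventually_sup'_add_smul_le c e, eventually_le_inf'_add_smul c e]
    with t hsup hinf
  unfold tropNorm tropNormDeriv
  linarith

theorem tropNormDeriv_add_of_monovary {f g : ι → ℝ} (h : Monovary f g) :
    tropNormDeriv c (f + g) = tropNormDeriv c f + tropNormDeriv c g := by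
  simp only [tropNormDeriv, sup'_add_of_monovary _ h, inf'_add_of_monovary _ h]
  ring

theorem tropNormDeriv_smul {δ : ℝ} (hδ : 0 ≤ δ) :
    tropNormDeriv c (δ • e) = δ * tropNormDeriv c e := by
  simp only [tropNormDeriv, sup'_smul_of_nonneg _ hδ, inf'_smul_of_nonneg _ hδ]
  ring

theorem tropNormDeriv_const (a : ℝ) : tropNormDeriv c (fun _ => a) = 0 := by
  simp only [tropNormDeriv, sup'_const, inf'_const, sub_self]

theorem tropNormDeriv_indicator_mem_bot (s : Set ι) :
    tropNormDeriv c (s.indicator 1) ∈ (⊥ : Subring ℝ) := by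
  have hint : ∀ i, s.indicator (1 : ι → ℝ) i ∈ (⊥ : Subring ℝ) := fun i => by
    by_cases hi : i ∈ s <;> simp [hi, zero_mem, one_mem]
  obtain ⟨a, -, ha⟩ := exists_mem_eq_sup' (maximizers_nonempty c) (s.indicator (1 : ι → ℝ))
  obtain ⟨b, -, hb⟩ := exists_mem_eq_inf' (minimizers_nonempty c) (s.indicator (1 : ι → ℝ))
  rw [tropNormDeriv, ha, hb]
  exact sub_mem (hint a) (hint b)

end TropNorm

section FermatWeber

variable {q : ℕ} [NeZero q] {J : Type*} [Fintype J]

theorem dtr_eq_tropNorm (x y : Fin q → ℝ) : dtr q x y = tropNorm (y - x) := rfl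

theorem dtr_self (x : Fin q → ℝ) : dtr q x x = 0 := by
  rw [dtr_eq_tropNorm, sub_self, tropNorm_zero]

theorem dtr_triangle (x y z : Fin q → ℝ) : dtr q x z ≤ dtr q x y + dtr q y z := by
  have := tropNorm_add_le (y - x) (z - y)
  rwa [sub_add_sub_cancel'] at this

theorem dtr_add_const_left (x y : Fin q → ℝ) (a : ℝ) :
    dtr q (x + fun _ => a) y = dtr q x y := by
  rw [dtr_eq_tropNorm, dtr_eq_tropNorm, ← tropNorm_add_const (y - x) (-a)]
  congr 1
  ext i
  simp only [Pi.sub_apply, Pi.add_apply]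
  ring

theorem dtr_add_const_right (x y : Fin q → ℝ) (a : ℝ) :
    dtr q x (y + fun _ => a) = dtr q x y := by
  rw [dtr_eq_tropNorm, dtr_eq_tropNorm, ← tropNorm_add_const (y - x) a]
  congr 1
  ext i
  simp only [Pi.sub_apply, Pi.add_apply]
  ring

theorem continuous_dtr_left (y : Fin q → ℝ) : Continuous fun x => dtr q x y :=
  continuous_tropNorm.comp (continuous_const.sub continuous_id)

theorem continuous_dtr_right (x : Fin q → ℝ) : Continuous fun y => dtr q x y :=
  continuous_tropNorm.comp (continuous_id.sub continuous_const)

theorem exists_forall_le_of_add_const_invariant {φ : (Fin q → ℝ) → ℝ} (hφ : Continuous φ)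
    (hinv : ∀ y a, φ (y + fun _ => a) = φ y) (x : Fin q → ℝ) {μ : ℝ} (hμ : 0 < μ)
    (hcoer : ∀ y, μ * dtr q x y ≤ φ y) : ∃ w, ∀ y, φ w ≤ φ y := by
  have hx : 0 ≤ φ x / μ := div_nonneg (by simpa [dtr_self] using hcoer x) hμ.le
  obtain ⟨w, -, hw⟩ := (isCompact_closedBall x (φ x / μ)).exists_isMinOn
    ⟨x, Metric.mem_closedBall_self hx⟩ hφ.continuousOn
  refine ⟨w, fun y => ?_⟩
  set y' := y + fun _ => x 0 - y 0
  rw [← hinv y (x 0 - y 0)]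
  by_cases hy' : φ y' ≤ φ x
  · refine isMinOn_iff.1 hw y' ((dist_pi_le_iff hx).2 fun i => ?_)
    have h0 : (y' - x) 0 = 0 := by simp [y']
    have hd : dtr q x y' ≤ φ x / μ := by rw [le_div_iff₀' hμ]; exact (hcoer y').trans hy'
    rw [Real.dist_eq]
    exact (abs_le_tropNorm_of_eq_zero h0 i).trans hd
  · exact (isMinOn_iff.1 hw x (Metric.mem_closedBall_self hx)).trans (le_of_not_ge hy')

noncomputable def fwSum (v : J → Fin q → ℝ) (y : Fin q → ℝ) : ℝ := ∑ j, dtr q y (v j)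

noncomputable def fwSumDeriv (v : J → Fin q → ℝ) (w e : Fin q → ℝ) : ℝ :=
  ∑ j, tropNormDeriv (v j - w) e

theorem fwFun_eq (n : ℕ) (v : Fin n → Fin q → ℝ) (y : Fin q → ℝ) :
    fwFun q n v y = 1 / (n : ℝ) * fwSum v y := rfl

theorem FW_eq_setOf_forall_fwSum_le {n : ℕ} (hn : 0 < n) (v : Fin n → Fin q → ℝ) :
    FW q n v = {y | ∀ z, fwSum v y ≤ fwSum v z} := by
  ext y
  simp only [FW, fwFun_eq, Set.mem_ofPred_eq,
    mul_le_mul_iff_of_pos_left (by positivity : (0 : ℝ) < 1 / n)]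

variable (v : J → Fin q → ℝ)

theorem fwSum_nonneg (y : Fin q → ℝ) : 0 ≤ fwSum v y :=
  sum_nonneg fun _ _ => tropNorm_nonneg _

theorem fwSum_add_const (y : Fin q → ℝ) (a : ℝ) : fwSum v (y + fun _ => a) = fwSum v y := by
  simp only [fwSum, dtr_add_const_left]

theorem continuous_fwSum : Continuous (fwSum v) :=
  continuous_finsetSum _ fun j _ => continuous_dtr_left (v j)

theorem fwSum_add_fwSumDeriv_le (w z : Fin q → ℝ) :
    fwSum v w + fwSumDeriv v w (w - z) ≤ fwSum v z := by
  have h := sum_le_sum fun j (_ : j ∈ univ) =>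
    tropNorm_add_tropNormDeriv_le (v j - w) (w - z)
  rw [sum_add_distrib] at h
  simp only [sub_add_sub_cancel] at h
  exact h

theorem eventually_fwSum_sub_smul_le (w e : Fin q → ℝ) :
    ∀ᶠ t in 𝓝[>] (0 : ℝ), fwSum v (w - t • e) ≤ fwSum v w + t * fwSumDeriv v w e := by
  filter_upwards [eventually_all.2 fun j => eventually_tropNorm_add_smul_le (v j - w) e]
    with t ht
  calc fwSum v (w - t • e) = ∑ j, tropNorm (v j - w + t • e) := by
        simp only [fwSum, dtr_eq_tropNorm, sub_sub_eq_add_sub, add_sub_right_comm]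
    _ ≤ ∑ j, (tropNorm (v j - w) + t * tropNormDeriv (v j - w) e) := sum_le_sum fun j _ => ht j
    _ = fwSum v w + t * fwSumDeriv v w e := by rw [sum_add_distrib, fwSumDeriv, mul_sum]; rfl

theorem exists_indicator_fwSumDeriv_le_neg_one {w u : Fin q → ℝ} (hu : fwSumDeriv v w u < 0) :
    ∃ s : Set (Fin q), fwSumDeriv v w (s.indicator 1) ≤ -1 := by
  obtain ⟨s, hs⟩ := exists_indicator_neg_of_monovary_additive (G := fwSumDeriv v w)
    (fun e e' h => by simp only [fwSumDeriv, tropNormDeriv_add_of_monovary _ h, sum_add_distrib])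
    (fun δ hδ e => by simp only [fwSumDeriv, tropNormDeriv_smul _ _ hδ, mul_sum])
    (fun a => by simp only [fwSumDeriv, tropNormDeriv_const, sum_const_zero]) hu
  obtain ⟨k, hk⟩ := Subring.mem_bot.1
    (Subring.sum_mem _ fun j _ => tropNormDeriv_indicator_mem_bot (v j - w) s)
  refine ⟨s, ?_⟩
  rw [fwSumDeriv, ← hk] at hs ⊢
  exact_mod_cast Int.le_sub_one_of_lt (by exact_mod_cast hs : k < 0)

theorem exists_dtr_le_and_fwSum_le_sub {w z : Fin q → ℝ} (hz : fwSum v z < fwSum v w) :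
    ∃ t > 0, ∃ w', dtr q w w' ≤ t ∧ fwSum v w' ≤ fwSum v w - t := by
  obtain ⟨s, hs⟩ := exists_indicator_fwSumDeriv_le_neg_one v
    (by linarith [fwSum_add_fwSumDeriv_le v w z] : fwSumDeriv v w (w - z) < 0)
  obtain ⟨t, ht, htpos⟩ :=
    ((eventually_fwSum_sub_smul_le v w _).and self_mem_nhdsWithin).exists
  refine ⟨t, htpos, w - t • s.indicator 1, ?_, by nlinarith⟩
  rw [dtr_eq_tropNorm, sub_sub_cancel_left]
  simpa using tropNorm_le_of_forall_mem_Icc (c := -(t • s.indicator 1)) (a := -t) (b := 0)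
    fun i => by by_cases hi : i ∈ s <;> simp [hi, htpos.le]

theorem exists_isMin_fwSum_and_mul_dtr_le (x : Fin q → ℝ) {r : ℝ} (hr0 : 0 < r) (hr1 : r < 1) :
    ∃ w, (∀ z, fwSum v w ≤ fwSum v z) ∧ r * dtr q x w ≤ fwSum v x - fwSum v w := by
  obtain ⟨w, hw⟩ := exists_forall_le_of_add_const_invariant
    (φ := fun y => fwSum v y + r * dtr q x y)
    ((continuous_fwSum v).add (continuous_const.mul (continuous_dtr_right x)))
    (fun y a => by simp only [fwSum_add_const, dtr_add_const_right]) x hr0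
    (fun y => le_add_of_nonneg_left (fwSum_nonneg v y))
  refine ⟨w, fun z => ?_, ?_⟩
  · by_contra! hz
    obtain ⟨t, ht, w', hww', hw'⟩ := exists_dtr_le_and_fwSum_le_sub v hz
    have := hw w'
    have := dtr_triangle x w w'
    nlinarith
  · have := hw x
    simp only [dtr_self, mul_zero, add_zero] at this
    linarith

theorem sInf_dtr_le_fwSum_sub (x : Fin q → ℝ) {y₀ : Fin q → ℝ}
    (hy₀ : ∀ z, fwSum v y₀ ≤ fwSum v z) :
    sInf ((fun y => dtr q x y) '' {y | ∀ z, fwSum v y ≤ fwSum v z}) ≤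
      fwSum v x - fwSum v y₀ := by
  set S := (fun y => dtr q x y) '' {y | ∀ z, fwSum v y ≤ fwSum v z}
  have hlim : Tendsto (fun r => r * sInf S) (𝓝[<] 1) (𝓝 (sInf S)) :=
    tendsto_nhdsWithin_of_tendsto_nhds
      ((continuous_id.mul continuous_const).tendsto' 1 _ (one_mul _))
  refine le_of_tendsto hlim ?_
  filter_upwards [Ioo_mem_nhdsLT zero_lt_one] with r ⟨hr0, hr1⟩
  obtain ⟨w, hw, hrw⟩ := exists_isMin_fwSum_and_mul_dtr_le v x hr0 hr1
  have hbdd : BddBelow S := ⟨0, by rintro _ ⟨y, -, rfl⟩; exact tropNorm_nonneg _⟩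
  calc r * sInf S ≤ r * dtr q x w := by gcongr; exact csInf_le hbdd ⟨w, hw, rfl⟩
    _ ≤ fwSum v x - fwSum v w := hrw
    _ = fwSum v x - fwSum v y₀ := by rw [le_antisymm (hw y₀) (hy₀ w)]

end FermatWeber

theorem stmt11_general (q n : ℕ) [NeZero q] (v : Fin n → Fin q → ℝ) :
    ∀ x : Fin q → ℝ, ∀ y₀ ∈ FW q n v,
      (1 / (n : ℝ)) * sInf ((fun y => dtr q x y) '' FW q n v) ≤
        fwFun q n v x - fwFun q n v y₀ := by
  intro x y₀ hy₀
  -- for `n = 0` both sides vanish, as `1 / 0 = 0`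
  rcases n.eq_zero_or_pos with rfl | hn
  · simp [fwFun]
  rw [FW_eq_setOf_forall_fwSum_le hn] at hy₀ ⊢
  rw [fwFun_eq, fwFun_eq, ← mul_sub]
  exact mul_le_mul_of_nonneg_left (sInf_dtr_le_fwSum_sub v x hy₀) (by positivity)

theorem stmt11 (q n : ℕ) [NeZero q] (hn : 0 < n) (v : Fin n → Fin q → ℝ)
    (hFW : (FW q n v).Nonempty) :
    ∀ x : Fin q → ℝ, ∀ y₀ ∈ FW q n v,
      (1 / (n : ℝ)) * sInf ((fun y => dtr q x y) '' FW q n v) ≤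
        fwFun q n v x - fwFun q n v y₀ :=
  stmt11_general q n v
end

section
/- Let y be a Fermat-Weber point of v_1, ..., v_n ∈ R^q (a minimizer of f(x) = (1/n)Σ_j d_tr(x, v_j)) that is a closest Fermat-Weber point to some x ∉ FW with respect to d_tr. For 1 ≤ i, let U_i ⊆ [q] be the union of the argmax sets of the i largest distinct values of x − y, and let u_i = 1_{U_i} be its indicator vector, where U_i is a proper nonempty subset of [q]. Then the one-sided directional derivative of f at y in direction u_i, namely lim_{t→0+} (f(y + t·u_i) − f(y))/t, is at least 1/n. -/
open Filter Topology

/-!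
Along the direction `u = 1_U` the Fermat-Weber function `f` is piecewise linear, and near `y`
its slope is `(1/n) Σ_j (u k_j - u i_j)` for an argmax `i_j` and an argmin `k_j` of `v_j - y`:
an integer multiple of `1/n`. Since `U` is an upper level set of `x - y`, the maxima of `y - x`
lie outside `U` and its minima inside, so `d_tr(x, y + t u) = d_tr(x, y) - t` for small `t > 0`.
These points are closer to `x` than `y` is, hence are not Fermat-Weber points, so `f` increases
strictly along `u`: the slope is a positive multiple of `1/n`.
-/

open Finset

section Finset

variable {ι α : Type*} [Fintype ι] [Nonempty ι] [LinearOrder α]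

lemma Finset.sup'_univ_eq_of_forall_le {f : ι → α} {i : ι} (h : ∀ l, f l ≤ f i) :
    univ.sup' univ_nonempty f = f i :=
  le_antisymm (sup'_le _ _ fun l _ => h l) (le_sup' f (mem_univ i))

lemma Finset.inf'_univ_eq_of_forall_le {f : ι → α} {i : ι} (h : ∀ l, f i ≤ f l) :
    univ.inf' univ_nonempty f = f i :=
  le_antisymm (inf'_le f (mem_univ i)) (le_inf' _ _ fun l _ => h l)

end Finset

lemma le_mul_intCast_of_pos {a : ℝ} {N : ℤ} (ha : 0 ≤ a) (h : 0 < a * N) : a ≤ a * N := by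
  have hN : 0 < N := Int.cast_pos.mp (pos_of_mul_pos_right h ha)
  exact le_mul_of_one_le_right ha (by exact_mod_cast hN)

/-- Among the maximizers of `a`, the one maximizing `b` stays a maximizer of `a + t b` for small
`t ≥ 0`. -/
lemma exists_eventually_forall_add_mul_le {ι : Type*} [Finite ι] [Nonempty ι] (a b : ι → ℝ) :
    ∃ i, (∀ l, a l ≤ a i) ∧ ∀ᶠ t in 𝓝[≥] (0 : ℝ), ∀ l, a l + t * b l ≤ a i + t * b i := by
  obtain ⟨i₀, hi₀⟩ := Finite.exists_max a
  obtain ⟨i, hi, hbi⟩ := Set.exists_max_image {l | ∀ m, a m ≤ a l} b (Set.toFinite _) ⟨i₀, hi₀⟩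
  refine ⟨i, hi, eventually_all.2 fun l => ?_⟩
  rcases (hi l).eq_or_lt with hl | hl
  · have hbl : b l ≤ b i := hbi l fun m => hl ▸ hi m
    filter_upwards [self_mem_nhdsWithin] with t (ht : 0 ≤ t)
    nlinarith
  · have hcont : ContinuousAt (fun t : ℝ => a l + t * b l - t * b i) 0 := by fun_prop
    filter_upwards [nhdsWithin_le_nhds (hcont.eventually_lt continuousAt_const (by simpa))]
      with t ht
    linarith

section TropicalDistance

variable {q : ℕ} [NeZero q]

lemma dtr_add_left (x w z : Fin q → ℝ) : dtr q (x + w) z = dtr q x (z - w) := by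
  simp only [dtr, Pi.add_apply, Pi.sub_apply, sub_sub, add_comm]

lemma exists_eventually_dtr_add_smul (x y b : Fin q → ℝ) :
    ∃ i k, (∀ l, y l - x l ≤ y i - x i) ∧ (∀ l, y k - x k ≤ y l - x l) ∧
      ∀ᶠ t in 𝓝[≥] (0 : ℝ), dtr q x (y + t • b) = dtr q x y + t * (b i - b k) := by
  obtain ⟨i, hi, hmax⟩ := exists_eventually_forall_add_mul_le (fun l => y l - x l) b
  obtain ⟨k, hk, hmin⟩ := exists_eventually_forall_add_mul_le (fun l => -(y l - x l)) (-b)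
  have hk' : ∀ l, y k - x k ≤ y l - x l := fun l => by linarith [hk l]
  refine ⟨i, k, hi, hk', ?_⟩
  filter_upwards [hmax, hmin] with t hmax hmin
  simp only [Pi.neg_apply] at hmin
  simp only [dtr, Pi.add_apply, Pi.smul_apply, smul_eq_mul,
    sup'_univ_eq_of_forall_le (f := fun l => y l - x l) hi,
    inf'_univ_eq_of_forall_le (f := fun l => y l - x l) hk',
    sup'_univ_eq_of_forall_le (f := fun l => y l + t * b l - x l) (i := i)
      fun l => by linarith [hmax l],
    inf'_univ_eq_of_forall_le (f := fun l => y l + t * b l - x l) (i := k)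
      fun l => by linarith [hmin l]]
  ring

lemma exists_eventually_fwFun_add_smul {n : ℕ} (v : Fin n → Fin q → ℝ) (y b : Fin q → ℝ) :
    ∃ i k : Fin n → Fin q, ∀ᶠ t in 𝓝[≥] (0 : ℝ),
      fwFun q n v (y + t • b) = fwFun q n v y + t * (1 / n * ∑ j, (b (k j) - b (i j))) := by
  choose i k _ _ h using fun j => exists_eventually_dtr_add_smul y (v j) (-b)
  refine ⟨i, k, ?_⟩
  filter_upwards [eventually_all.2 h] with t ht
  have hterm : ∀ j, dtr q (y + t • b) (v j) = dtr q y (v j) + t * (b (k j) - b (i j)) := by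
    intro j
    rw [dtr_add_left, sub_eq_add_neg, ← smul_neg, ht j]
    simp only [Pi.neg_apply]
    ring
  simp only [fwFun, hterm, sum_add_distrib, ← mul_sum]
  ring

lemma eventually_dtr_add_smul_indicator_upperLevelSet (x y : Fin q → ℝ) (c : ℝ)
    (hne : {a | c ≤ x a - y a}.Nonempty) (hproper : {a | c ≤ x a - y a} ≠ Set.univ) :
    ∀ᶠ t in 𝓝[≥] (0 : ℝ),
      dtr q x (y + t • {a | c ≤ x a - y a}.indicator fun _ => 1) = dtr q x y - t := by
  obtain ⟨i, k, hi, hk, h⟩ :=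
    exists_eventually_dtr_add_smul x y ({a | c ≤ x a - y a}.indicator fun _ => 1)
  obtain ⟨a, ha⟩ := hne
  obtain ⟨b, hb⟩ := (Set.ne_univ_iff_exists_notMem _).1 hproper
  simp only [Set.mem_ofPred_eq, not_le] at ha hb
  have hiU : i ∉ {a | c ≤ x a - y a} := fun hiU => by linarith [hi b, hiU.out]
  have hkU : k ∈ {a | c ≤ x a - y a} := show c ≤ _ by linarith [hk a]
  filter_upwards [h] with t ht
  rw [ht, Set.indicator_of_notMem hiU, Set.indicator_of_mem hkU]
  ring

end TropicalDistance

theorem stmt12_general (q n : ℕ) [NeZero q] (v : Fin n → Fin q → ℝ)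
    (x y : Fin q → ℝ)
    (hy : y ∈ FW q n v)
    -- `y` is a closest Fermat-Weber point to `x`
    (hclosest : ∀ z ∈ FW q n v, dtr q x y ≤ dtr q x z)
    -- `U` is the union of the argmax sets of the `i` largest distinct values of `x - y`,
    -- i.e. a nonempty proper upper level set of `x - y`
    (U : Set (Fin q)) (hU : ∃ c : ℝ, U = {a : Fin q | c ≤ x a - y a})
    (hUne : U.Nonempty) (hUproper : U ≠ Set.univ) :
    ∃ L : ℝ, (1 / (n : ℝ)) ≤ L ∧
      Tendsto (fun t : ℝ =>
          (fwFun q n v (y + t • U.indicator (fun _ => (1 : ℝ))) - fwFun q n v y) / t)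
        (𝓝[>] 0) (𝓝 L) := by
  obtain ⟨c, rfl⟩ := hU
  set U := {a | c ≤ x a - y a}
  set u : Fin q → ℝ := U.indicator fun _ => 1
  obtain ⟨i, k, hf⟩ := exists_eventually_fwFun_add_smul v y u
  obtain ⟨N, hN⟩ : ∃ N : ℤ, ∑ j, (u (k j) - u (i j)) = N :=
    ⟨∑ j, (U.indicator (fun _ => 1) (k j) - U.indicator (fun _ => 1) (i j)), by
      simp only [u, Set.indicator_apply, Int.cast_sum, Int.cast_sub, apply_ite Int.cast,
        Int.cast_one, Int.cast_zero]⟩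
  rw [hN] at hf
  replace hf := hf.filter_mono (nhdsWithin_mono _ Set.Ioi_subset_Ici_self)
  have hd := (eventually_dtr_add_smul_indicator_upperLevelSet x y c hUne hUproper).filter_mono
    (nhdsWithin_mono _ Set.Ioi_subset_Ici_self)
  obtain ⟨t, ⟨hft, hdt⟩, ht : 0 < t⟩ := ((hf.and hd).and self_mem_nhdsWithin).exists
  have hnot : y + t • u ∉ FW q n v := fun h => by linarith [hclosest _ h]
  obtain ⟨z, hz⟩ : ∃ z, fwFun q n v z < fwFun q n v (y + t • u) := by simpa [FW] using hnot
  have hpos : 0 < 1 / (n : ℝ) * N := pos_of_mul_pos_right (by linarith [hy z]) ht.le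
  refine ⟨1 / n * N, ?_, tendsto_const_nhds.congr' ?_⟩
  · exact le_mul_intCast_of_pos (by positivity) hpos
  · filter_upwards [hf, self_mem_nhdsWithin] with t ht (ht0 : 0 < t)
    rw [ht, add_sub_cancel_left, mul_div_cancel_left₀ _ ht0.ne']

theorem stmt12 (q n : ℕ) [NeZero q] (hn : 0 < n) (v : Fin n → Fin q → ℝ)
    (x y : Fin q → ℝ)
    (hy : y ∈ FW q n v) (hx : x ∉ FW q n v)
    -- `y` is a closest Fermat-Weber point to `x`
    (hclosest : ∀ z ∈ FW q n v, dtr q x y ≤ dtr q x z)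
    -- `U` is the union of the argmax sets of the `i` largest distinct values of `x - y`,
    -- i.e. a nonempty proper upper level set of `x - y`
    (U : Set (Fin q)) (hU : ∃ c : ℝ, U = {a : Fin q | c ≤ x a - y a})
    (hUne : U.Nonempty) (hUproper : U ≠ Set.univ) :
    ∃ L : ℝ, (1 / (n : ℝ)) ≤ L ∧
      Tendsto (fun t : ℝ =>
          (fwFun q n v (y + t • U.indicator (fun _ => (1 : ℝ))) - fwFun q n v y) / t)
        (𝓝[>] 0) (𝓝 L) :=
  stmt12_general q n v x y hy hclosest U hU hUne hUproper
end

section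
/- Let y minimize the Fermat-Weber function f(x) = (1/n)Σ_j d_tr(x, v_j) for v_1, ..., v_n ∈ R^q, suppose y is a closest minimizer to a point x ∉ FW (with D = d_tr(x,y) > 0), and suppose that for each indicator vector u_i of the nested level sets of x − y (as in the tropical line segment decomposition) the directional derivative ∂_{u_i} f(y) is at least 1/n. Then f(x) − f(y) ≥ D/n; that is, (1/n)·d_tr(x, FW) ≤ f(x) − min f. -/
open Filter Topology

/-!
Write `w = x - y` and `U_c = {i | c ≤ w i}`. For a single sample `v`, moving `y` by `t • 1_{U_c}`
lowers `max (v - y)` by `t` exactly when all coordinates attaining it lie in `U_c`, and lowers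
`min (v - y)` by `t` as soon as one coordinate attaining it does. Choosing, among the maximisers of
`v - y`, a point `a` minimising `w`, and among the minimisers a point `b` maximising `w`, the
directional derivative of `d_tr(·, v)` at `y` along `1_{U_c}` is thus at most
`[c ≤ w b] - [c ≤ w a]`, while `d_tr(x, v) - d_tr(y, v) ≥ w b - w a`. The hypothesis bounds the
sum of the former below by `1` for every level `c` strictly between `min w` and `max w`;
integrating over `c` turns this into `Σ (w b - w a) ≥ max w - min w = d_tr(x, y)`.
-/

open MeasureTheory Set

section Extremal

variable {ι : Type*} [Fintype ι] [Nonempty ι]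

theorem exists_eq_sup'_forall_le {α β : Type*} [LinearOrder α] [LinearOrder β] (g : ι → α)
    (w : ι → β) :
    ∃ a, g a = Finset.univ.sup' Finset.univ_nonempty g ∧
      ∀ i, g i = Finset.univ.sup' Finset.univ_nonempty g → w a ≤ w i := by
  obtain ⟨a₀, -, ha₀⟩ := Finset.exists_mem_eq_sup' Finset.univ_nonempty g
  obtain ⟨a, ha, hmin⟩ :=
    (Finset.univ.filter fun i => g i = Finset.univ.sup' Finset.univ_nonempty g).exists_min_image w
      ⟨a₀, by simp [ha₀]⟩
  exact ⟨a, (Finset.mem_filter.1 ha).2, fun i hi => hmin i (by simp [hi])⟩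

theorem exists_eq_inf'_forall_ge {α β : Type*} [LinearOrder α] [LinearOrder β] (g : ι → α)
    (w : ι → β) :
    ∃ b, g b = Finset.univ.inf' Finset.univ_nonempty g ∧
      ∀ i, g i = Finset.univ.inf' Finset.univ_nonempty g → w i ≤ w b := by
  obtain ⟨b₀, -, hb₀⟩ := Finset.exists_mem_eq_inf' Finset.univ_nonempty g
  obtain ⟨b, hb, hmax⟩ :=
    (Finset.univ.filter fun i => g i = Finset.univ.inf' Finset.univ_nonempty g).exists_max_image w
      ⟨b₀, by simp [hb₀]⟩
  exact ⟨b, (Finset.mem_filter.1 hb).2, fun i hi => hmax i (by simp [hi])⟩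

variable (g : ι → ℝ) (U : Set ι)

theorem sup'_sub_mul_indicator_le {t : ℝ} (ht : 0 ≤ t) :
    Finset.univ.sup' Finset.univ_nonempty (fun i => g i - t * U.indicator (fun _ => 1) i) ≤
      Finset.univ.sup' Finset.univ_nonempty g := by
  refine Finset.sup'_le _ _ fun i _ => ?_
  have := Finset.le_sup' g (Finset.mem_univ i)
  have : 0 ≤ t * U.indicator (fun _ => (1 : ℝ)) i :=
    mul_nonneg ht (indicator_nonneg (fun _ _ => zero_le_one) i)
  linarith

theorem le_inf'_sub_mul_indicator {t : ℝ} (ht : 0 ≤ t) :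
    Finset.univ.inf' Finset.univ_nonempty g - t ≤
      Finset.univ.inf' Finset.univ_nonempty (fun i => g i - t * U.indicator (fun _ => 1) i) := by
  refine Finset.le_inf' _ _ fun i _ => ?_
  have := Finset.inf'_le g (Finset.mem_univ i)
  have : t * U.indicator (fun _ => (1 : ℝ)) i ≤ t :=
    mul_le_of_le_one_right ht (indicator_apply_le' (fun _ => le_rfl) fun _ => zero_le_one)
  linarith

theorem eventually_sup'_sub_mul_indicator_le
    (hU : ∀ i, g i = Finset.univ.sup' Finset.univ_nonempty g → i ∈ U) :
    ∀ᶠ t in 𝓝[>] 0,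
      Finset.univ.sup' Finset.univ_nonempty (fun i => g i - t * U.indicator (fun _ => 1) i) ≤
        Finset.univ.sup' Finset.univ_nonempty g - t := by
  have hle : ∀ i, g i ≤ Finset.univ.sup' Finset.univ_nonempty g :=
    fun i => Finset.le_sup' g (Finset.mem_univ i)
  have hi : ∀ i, ∀ᶠ t in 𝓝[>] (0 : ℝ),
      g i - t * U.indicator (fun _ => 1) i ≤ Finset.univ.sup' Finset.univ_nonempty g - t := by
    intro i
    by_cases hiU : i ∈ U
    · exact Eventually.of_forall fun t => by simp [hiU, hle i]
    · have hgap : 0 < Finset.univ.sup' Finset.univ_nonempty g - g i :=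
        sub_pos.2 ((hle i).lt_of_ne fun h => hiU (hU i h))
      filter_upwards [nhdsWithin_le_nhds (eventually_lt_nhds hgap)] with t ht
      simp only [hiU, not_false_eq_true, indicator_of_notMem, mul_zero]
      linarith
  filter_upwards [eventually_all.2 hi] with t ht
  exact Finset.sup'_le _ _ fun i _ => ht i

theorem eventually_inf'_le_inf'_sub_mul_indicator
    (hU : ∀ i, g i = Finset.univ.inf' Finset.univ_nonempty g → i ∉ U) :
    ∀ᶠ t in 𝓝[>] 0,
      Finset.univ.inf' Finset.univ_nonempty g ≤
        Finset.univ.inf' Finset.univ_nonempty (fun i => g i - t * U.indicator (fun _ => 1) i) := by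
  have hle : ∀ i, Finset.univ.inf' Finset.univ_nonempty g ≤ g i :=
    fun i => Finset.inf'_le g (Finset.mem_univ i)
  have hi : ∀ i, ∀ᶠ t in 𝓝[>] (0 : ℝ),
      Finset.univ.inf' Finset.univ_nonempty g ≤ g i - t * U.indicator (fun _ => 1) i := by
    intro i
    by_cases hiU : i ∈ U
    · have hgap : 0 < g i - Finset.univ.inf' Finset.univ_nonempty g :=
        sub_pos.2 ((hle i).lt_of_ne fun h => hU i h.symm hiU)
      filter_upwards [nhdsWithin_le_nhds (eventually_lt_nhds hgap)] with t ht
      simp only [hiU, indicator_of_mem, mul_one]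
      linarith
    · exact Eventually.of_forall fun t => by simp [hiU, hle i]
  filter_upwards [eventually_all.2 hi] with t ht
  exact Finset.le_inf' _ _ fun i _ => ht i

end Extremal

section LayerCake

variable {J : Type*} [Fintype J]

noncomputable def levelCount (α β : J → ℝ) (c : ℝ) : ℝ :=
  ∑ j, ((Iic (β j)).indicator 1 c - (Iic (α j)).indicator 1 c)

theorem integral_Ioc_indicator_Iic {m M b : ℝ} (hm : m ≤ b) (hM : b ≤ M) :
    ∫ c in Ioc m M, (Iic b).indicator 1 c = b - m := by
  rw [integral_indicator_one measurableSet_Iic, measureReal_restrict_apply measurableSet_Iic,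
    inter_comm, Ioc_inter_Iic, min_eq_right hM, Real.volume_real_Ioc_of_le hm]

theorem integrableOn_Ioc_indicator_Iic (m M b : ℝ) :
    IntegrableOn ((Iic b).indicator (1 : ℝ → ℝ)) (Ioc m M) :=
  (integrableOn_const (C := (1 : ℝ)) measure_Ioc_lt_top.ne).indicator measurableSet_Iic

theorem integrableOn_levelCount (α β : J → ℝ) (m M : ℝ) :
    IntegrableOn (levelCount α β) (Ioc m M) :=
  integrable_finsetSum _ fun _ _ =>
    (integrableOn_Ioc_indicator_Iic _ _ _).sub (integrableOn_Ioc_indicator_Iic _ _ _)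

theorem integral_levelCount {α β : J → ℝ} {m M : ℝ} (hα : ∀ j, α j ∈ Icc m M)
    (hβ : ∀ j, β j ∈ Icc m M) :
    ∫ c in Ioc m M, levelCount α β c = ∑ j, (β j - α j) := by
  have h := integrableOn_Ioc_indicator_Iic m M
  simp only [levelCount]
  rw [integral_finsetSum _ fun j _ => by exact (h (β j)).sub (h (α j))]
  refine Finset.sum_congr rfl fun j _ => ?_
  rw [integral_sub (h _) (h _), integral_Ioc_indicator_Iic (hβ j).1 (hβ j).2,
    integral_Ioc_indicator_Iic (hα j).1 (hα j).2]
  ring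

theorem mul_sub_le_of_forall_le_mul_levelCount {α β : J → ℝ} {m M κ r : ℝ} (hmM : m ≤ M)
    (hα : ∀ j, α j ∈ Icc m M) (hβ : ∀ j, β j ∈ Icc m M)
    (h : ∀ c ∈ Ioc m M, κ ≤ r * levelCount α β c) :
    κ * (M - m) ≤ r * ∑ j, (β j - α j) :=
  calc κ * (M - m) = ∫ _ in Ioc m M, κ := by
        rw [setIntegral_const, Real.volume_real_Ioc_of_le hmM, smul_eq_mul, mul_comm]
    _ ≤ ∫ c in Ioc m M, r * levelCount α β c :=
        setIntegral_mono_on (integrableOn_const measure_Ioc_lt_top.ne)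
          ((integrableOn_levelCount α β m M).const_mul r) measurableSet_Ioc h
    _ = r * ∑ j, (β j - α j) := by rw [integral_const_mul, integral_levelCount hα hβ]

end LayerCake

section FermatWeber

variable {q : ℕ} [NeZero q]

theorem exists_dtr_le_and_eventually_dtr_add_smul_indicator_le (x y v : Fin q → ℝ) :
    ∃ a b : Fin q, dtr q y v + ((x b - y b) - (x a - y a)) ≤ dtr q x v ∧
      ∀ c : ℝ, ∀ᶠ t in 𝓝[>] 0,
        dtr q (y + t • {i | c ≤ x i - y i}.indicator (fun _ => 1)) v ≤
          dtr q y v + t * ((Iic (x b - y b)).indicator 1 c - (Iic (x a - y a)).indicator 1 c) := by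
  set g : Fin q → ℝ := fun i => v i - y i
  obtain ⟨a, ha, ha_min⟩ := exists_eq_sup'_forall_le g fun i => x i - y i
  obtain ⟨b, hb, hb_max⟩ := exists_eq_inf'_forall_ge g fun i => x i - y i
  refine ⟨a, b, ?_, fun c => ?_⟩
  · have := Finset.le_sup' (fun i => v i - x i) (Finset.mem_univ a)
    have := Finset.inf'_le (fun i => v i - x i) (Finset.mem_univ b)
    simp only [dtr, g] at *
    linarith
  set U : Set (Fin q) := {i | c ≤ x i - y i}
  have hsup : ∀ᶠ t in 𝓝[>] 0,
      Finset.univ.sup' Finset.univ_nonempty (fun i => g i - t * U.indicator (fun _ => 1) i) ≤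
        Finset.univ.sup' Finset.univ_nonempty g - t * (Iic (x a - y a)).indicator 1 c := by
    by_cases hc : c ≤ x a - y a
    · simpa [hc] using
        eventually_sup'_sub_mul_indicator_le g U fun i hi => hc.trans (ha_min i hi)
    · filter_upwards [self_mem_nhdsWithin] with t ht
      simpa [hc] using sup'_sub_mul_indicator_le g U (le_of_lt ht)
  have hinf : ∀ᶠ t in 𝓝[>] 0,
      Finset.univ.inf' Finset.univ_nonempty g - t * (Iic (x b - y b)).indicator 1 c ≤
        Finset.univ.inf' Finset.univ_nonempty (fun i => g i - t * U.indicator (fun _ => 1) i) := by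
    by_cases hc : c ≤ x b - y b
    · filter_upwards [self_mem_nhdsWithin] with t ht
      simpa [hc] using le_inf'_sub_mul_indicator g U (le_of_lt ht)
    · simpa [hc] using eventually_inf'_le_inf'_sub_mul_indicator g U
        fun i hi hiU => hc ((show c ≤ x i - y i from hiU).trans (hb_max i hi))
  filter_upwards [hsup, hinf] with t hsup hinf
  have hshift : (fun i => v i - (y + t • U.indicator (fun _ => (1 : ℝ))) i) =
      fun i => g i - t * U.indicator (fun _ => 1) i := by
    funext i
    simp only [g, Pi.add_apply, Pi.smul_apply, smul_eq_mul]
    ring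
  simp only [dtr, hshift] at *
  linarith

variable {n : ℕ} (v : Fin n → Fin q → ℝ)

theorem fwFun_sub_fwFun (x y : Fin q → ℝ) :
    fwFun q n v x - fwFun q n v y = 1 / n * ∑ j, (dtr q x (v j) - dtr q y (v j)) := by
  rw [fwFun, fwFun, ← mul_sub, ← Finset.sum_sub_distrib]

theorem le_of_tendsto_fwFun_slope {y u : Fin q → ℝ} {K : Fin n → ℝ} {L : ℝ}
    (hK : ∀ j, ∀ᶠ t in 𝓝[>] 0, dtr q (y + t • u) (v j) ≤ dtr q y (v j) + t * K j)
    (hL : Tendsto (fun t : ℝ => (fwFun q n v (y + t • u) - fwFun q n v y) / t) (𝓝[>] 0) (𝓝 L)) :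
    L ≤ 1 / n * ∑ j, K j := by
  refine le_of_tendsto hL ?_
  filter_upwards [eventually_all.2 hK, self_mem_nhdsWithin] with t hK ht
  rw [div_le_iff₀ ht, fwFun_sub_fwFun]
  calc 1 / n * ∑ j, (dtr q (y + t • u) (v j) - dtr q y (v j)) ≤ 1 / n * ∑ j, t * K j :=
        mul_le_mul_of_nonneg_left (Finset.sum_le_sum fun j _ => by linarith [hK j]) (by positivity)
    _ = (1 / n * ∑ j, K j) * t := by rw [← Finset.mul_sum]; ring

end FermatWeber

theorem stmt15_general (q n : ℕ) [NeZero q] (v : Fin n → Fin q → ℝ)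
    (x y : Fin q → ℝ)
    -- for each indicator vector `u_i` of the nested level sets of `x − y`,
    -- the one-sided directional derivative of `f` at `y` is at least `1/n`
    (hderiv : ∀ U : Set (Fin q), (∃ c : ℝ, U = {a : Fin q | c ≤ x a - y a}) →
      U.Nonempty → U ≠ Set.univ →
      ∃ L : ℝ, (1 / (n : ℝ)) ≤ L ∧
        Tendsto (fun t : ℝ =>
            (fwFun q n v (y + t • U.indicator (fun _ => (1 : ℝ))) - fwFun q n v y) / t)
          (𝓝[>] 0) (𝓝 L)) :
    dtr q x y / n ≤ fwFun q n v x - fwFun q n v y := by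
  choose a b hdist hslope using fun j =>
    exists_dtr_le_and_eventually_dtr_add_smul_indicator_le x y (v j)
  -- `m = min (x - y)` and `M = max (x - y)`, written through `y - x` as in `dtr q x y`
  set m := -Finset.univ.sup' Finset.univ_nonempty fun i => y i - x i
  set M := -Finset.univ.inf' Finset.univ_nonempty fun i => y i - x i
  have hmem : ∀ i, x i - y i ∈ Icc m M := fun i =>
    ⟨by linarith [Finset.le_sup' (fun i => y i - x i) (Finset.mem_univ i)],
      by linarith [Finset.inf'_le (fun i => y i - x i) (Finset.mem_univ i)]⟩
  have hlevel : ∀ c ∈ Ioc m M, 1 / (n : ℝ) ≤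
      1 / n * levelCount (fun j => x (a j) - y (a j)) (fun j => x (b j) - y (b j)) c := by
    rintro c ⟨hmc, hcM⟩
    obtain ⟨i, -, hi⟩ := (Finset.inf'_le_iff _).1 (le_neg.1 hcM)
    obtain ⟨k, -, hk⟩ := (Finset.lt_sup'_iff _).1 (neg_lt.1 hmc)
    obtain ⟨L, hL, hlim⟩ := hderiv _ ⟨c, rfl⟩ ⟨i, show c ≤ x i - y i by linarith⟩
      (ne_univ_iff_exists_notMem _ |>.2 ⟨k, show ¬c ≤ x k - y k by linarith⟩)
    exact hL.trans (le_of_tendsto_fwFun_slope v (fun j => hslope j c) hlim)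
  calc dtr q x y / n = 1 / n * (M - m) := by rw [dtr]; ring
    _ ≤ 1 / n * ∑ j, ((x (b j) - y (b j)) - (x (a j) - y (a j))) :=
        mul_sub_le_of_forall_le_mul_levelCount ((hmem 0).1.trans (hmem 0).2)
          (fun _ => hmem _) (fun _ => hmem _) hlevel
    _ ≤ 1 / n * ∑ j, (dtr q x (v j) - dtr q y (v j)) :=
        mul_le_mul_of_nonneg_left (Finset.sum_le_sum fun j _ => by linarith [hdist j])
          (by positivity)
    _ = fwFun q n v x - fwFun q n v y := (fwFun_sub_fwFun v x y).symm

theorem stmt15 (q n : ℕ) [NeZero q] (hn : 0 < n) (v : Fin n → Fin q → ℝ)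
    (x y : Fin q → ℝ)
    (hy : y ∈ FW q n v) (hx : x ∉ FW q n v)
    -- `y` is a closest Fermat-Weber point to `x`
    (hclosest : ∀ z ∈ FW q n v, dtr q x y ≤ dtr q x z)
    (hD : 0 < dtr q x y)
    -- for each indicator vector `u_i` of the nested level sets of `x − y`,
    -- the one-sided directional derivative of `f` at `y` is at least `1/n`
    (hderiv : ∀ U : Set (Fin q), (∃ c : ℝ, U = {a : Fin q | c ≤ x a - y a}) →
      U.Nonempty → U ≠ Set.univ →
      ∃ L : ℝ, (1 / (n : ℝ)) ≤ L ∧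
        Tendsto (fun t : ℝ =>
            (fwFun q n v (y + t • U.indicator (fun _ => (1 : ℝ))) - fwFun q n v y) / t)
          (𝓝[>] 0) (𝓝 L)) :
    dtr q x y / n ≤ fwFun q n v x - fwFun q n v y :=
  stmt15_general q n v x y hderiv
end
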